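/- For all α, β ∈ [0, π), if C_∞ · exp(α•B) = c • (C_∞ · exp(β•B)) for some nonzero real scalar c, then α = β. In particular the camera matrices C_α := C_∞ · exp(α•B), α ∈ [0,π), are pairwise inequivalent as projection matrices, so this family contains infinitely many distinct projections. -/

import Mathlib

open Matrix

/-- The null-polarity matrix used in Cremona's method. -/
def Bmat : Matrix (Fin 4) (Fin 4) ℝ :=
  !![0, -1, 0, 0;
     1,  0, 0, 0;
     0,  0, 0, -1;
     0,  0, 1, 0]

/-- Parallel projection along the z-axis, in homogeneous coordinates. -/
def Cinf : Matrix (Fin 3) (Fin 4) ℝ :=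
  !![1, 0, 0, 0;
     0, 1, 0, 0;
     0, 0, 0, 1]

/-! Since `B² = -1`, the assignment `i ↦ B` embeds `ℂ` into the matrix algebra, so
`exp (α • B) = cos α • 1 + sin α • B`. The first row of `C∞ * exp (α • B)` is therefore
`(cos α, -sin α, 0, 0)`, and proportional rows force `sin (α - β) = 0`, i.e. `α = β` when
`|α - β| < π`. -/

open Real

section ComplexStructure

variable {A : Type*} [Ring A] [Algebra ℝ A] [TopologicalSpace A] [IsTopologicalRing A]
  [ContinuousSMul ℝ A] [T2Space A]

theorem AlgHom.map_exp_complex (f : ℂ →ₐ[ℝ] A) (z : ℂ) :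
    f (NormedSpace.exp z) = NormedSpace.exp (f z) := by
  have hf : Continuous f := f.toLinearMap.continuous_of_finiteDimensional
  rw [NormedSpace.exp_eq_tsum ℝ, NormedSpace.exp_eq_tsum ℝ]
  refine ((NormedSpace.expSeries_summable' (𝕂 := ℝ) z).hasSum.map f hf).tsum_eq.symm.trans ?_
  simp only [Function.comp_def, map_inv_natCast_smul f ℝ ℝ, map_pow]

theorem NormedSpace.exp_smul_of_mul_self_eq_neg_one {J : A} (hJ : J * J = -1) (t : ℝ) :
    NormedSpace.exp (t • J) = cos t • 1 + sin t • J := by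
  set f := Complex.liftAux J hJ
  have hfI : f Complex.I = J := Complex.liftAux_apply_I J hJ
  have hf_real (r : ℝ) : f r = r • 1 := by
    rw [← Complex.coe_algebraMap, AlgHom.commutes, Algebra.algebraMap_eq_smul_one]
  have hexp : NormedSpace.exp ((t : ℂ) * Complex.I) = cos t + sin t * Complex.I := by
    rw [← Complex.exp_eq_exp_ℂ, Complex.exp_mul_I, Complex.ofReal_cos, Complex.ofReal_sin]
  calc NormedSpace.exp (t • J)
      = f (NormedSpace.exp ((t : ℂ) * Complex.I)) := by
        rw [f.map_exp_complex, ← Complex.real_smul, _root_.map_smul, hfI]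
    _ = cos t • 1 + sin t • J := by
        rw [hexp, map_add, _root_.map_mul, hf_real, hf_real, hfI, smul_mul_assoc, one_mul]

end ComplexStructure

theorem Bmat_mul_self : Bmat * Bmat = -1 := by
  ext i j
  fin_cases i <;> fin_cases j <;> simp [Bmat, Matrix.mul_apply, Fin.sum_univ_four]

theorem exp_smul_Bmat (α : ℝ) :
    NormedSpace.exp (α • Bmat) = cos α • 1 + sin α • Bmat :=
  NormedSpace.exp_smul_of_mul_self_eq_neg_one Bmat_mul_self α

theorem Cinf_mul_exp_smul_Bmat_zero_zero (α : ℝ) :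
    (Cinf * NormedSpace.exp (α • Bmat)) 0 0 = cos α := by
  rw [exp_smul_Bmat]
  simp [Cinf, Bmat, Matrix.mul_apply, Fin.sum_univ_four, Matrix.one_apply]

theorem Cinf_mul_exp_smul_Bmat_zero_one (α : ℝ) :
    (Cinf * NormedSpace.exp (α • Bmat)) 0 1 = -sin α := by
  rw [exp_smul_Bmat]
  simp [Cinf, Bmat, Matrix.mul_apply, Fin.sum_univ_four, Matrix.one_apply]

theorem Real.eq_of_cos_eq_mul_cos_of_sin_eq_mul_sin {α β c : ℝ} (hαβ : |α - β| < π)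
    (hcos : cos α = c * cos β) (hsin : sin α = c * sin β) : α = β := by
  have hsin_sub : sin (α - β) = 0 := by
    rw [sin_sub, hcos, hsin]
    ring
  rw [abs_lt] at hαβ
  exact sub_eq_zero.1 ((sin_eq_zero_iff_of_lt_of_lt hαβ.1 hαβ.2).1 hsin_sub)

/-- For `α, β ∈ [0, π)`, if `C∞ * exp (α • B)` and `C∞ * exp (β • B)` differ by a
nonzero scalar factor then `α = β`: the camera matrices `C_α`, `α ∈ [0, π)`, are
pairwise inequivalent as projection matrices. -/
theorem camera_family_pairwise_inequivalent (α β : ℝ)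
    (hα : α ∈ Set.Ico 0 Real.pi) (hβ : β ∈ Set.Ico 0 Real.pi)
    (h : ∃ c : ℝ, c ≠ 0 ∧
      Cinf * NormedSpace.exp (α • Bmat) =
        c • (Cinf * NormedSpace.exp (β • Bmat))) :
    α = β := by
  obtain ⟨c, -, heq⟩ := h
  have hcos := congrFun (congrFun heq 0) 0
  have hsin := congrFun (congrFun heq 0) 1
  simp only [Matrix.smul_apply, smul_eq_mul, Cinf_mul_exp_smul_Bmat_zero_zero,
    Cinf_mul_exp_smul_Bmat_zero_one] at hcos hsin
  refine Real.eq_of_cos_eq_mul_cos_of_sin_eq_mul_sin ?_ hcos (by linarith)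
  rw [abs_lt]
  constructor <;> linarith [hα.1, hα.2, hβ.1, hβ.2]
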